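/- arXiv:2512.25060 — 2 statements merged into one kernel-verified Lean document; each statement's English description precedes it below -/
import Mathlib

section
/- Suppose there exist two neurons i, j whose phase columns w_i = (cos φ_i, −sin φ_i) and w_j = (cos φ_j, −sin φ_j) are linearly independent in ℝ², i.e. sin(φ_i − φ_j) ≠ 0. Then the matrix X with entries X_{(a,b),i} = cos(θ_a + φ_i) + cos(θ_b + φ_i) has rank exactly 2. -/
/-!
Every entry is the real part of `(e^{iθ_a} + e^{iθ_b}) e^{iφ_i}`, so `X` factors through `ℝ²` and
has rank at most `2`. Conversely the `2 × 2` minor on the rows `(0,0), (1,1)` and the columns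
`i, j` equals `4 sin(2π/p) sin(φ_i - φ_j)`, which is nonzero once `p ≥ 3`.
-/

open Real

namespace Matrix

variable {m n ι R : Type*} [Fintype n] [Fintype ι] [DecidableEq ι]

theorem card_le_rank_of_det_submatrix_ne_zero [CommRing R] [IsDomain R] (A : Matrix m n R)
    (r : ι → m) (c : ι → n) (h : (A.submatrix r c).det ≠ 0) : Fintype.card ι ≤ A.rank :=
  rank_of_det_ne_zero h ▸ rank_submatrix_le A r c

end Matrix

theorem Real.cos_add_mul_cos_add_sub_cos_add_mul_cos_add (x y u v : ℝ) :
    cos (x + u) * cos (y + v) - cos (x + v) * cos (y + u) = sin (y - x) * sin (u - v) := by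
  simp only [cos_add, sin_sub]
  ring

theorem Real.sin_two_pi_div_pos {p : ℝ} (hp : 2 < p) : 0 < sin (2 * π / p) := by
  have hp₀ : 0 < p := by linarith
  apply sin_pos_of_pos_of_lt_pi (by positivity)
  rw [div_lt_iff₀ hp₀]
  nlinarith [pi_pos]

section PairCosineMatrix

variable {ι κ : Type*} (θ : ι → ℝ) (φ : κ → ℝ)

noncomputable def pairCosineMatrix : Matrix (ι × ι) κ ℝ :=
  Matrix.of fun ab i => cos (θ ab.1 + φ i) + cos (θ ab.2 + φ i)

theorem pairCosineMatrix_eq_mul :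
    pairCosineMatrix θ φ =
      Matrix.of (fun (ab : ι × ι) => ![cos (θ ab.1) + cos (θ ab.2), sin (θ ab.1) + sin (θ ab.2)]) *
        Matrix.of (fun (k : Fin 2) (i : κ) => ![cos (φ i), -sin (φ i)] k) := by
  ext ab i
  simp only [pairCosineMatrix, Matrix.mul_apply, Fin.sum_univ_two, Matrix.of_apply,
    Matrix.cons_val_zero, Matrix.cons_val_one, cos_add]
  ring

theorem rank_pairCosineMatrix_le_two [Fintype κ] : (pairCosineMatrix θ φ).rank ≤ 2 := by
  rw [pairCosineMatrix_eq_mul]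
  exact (Matrix.rank_mul_le_left _ _).trans
    ((Matrix.rank_le_card_width _).trans_eq (Fintype.card_fin 2))

theorem det_pairCosineMatrix_submatrix_diag (a b : ι) (i j : κ) :
    ((pairCosineMatrix θ φ).submatrix ![(a, a), (b, b)] ![i, j]).det =
      4 * sin (θ b - θ a) * sin (φ i - φ j) := by
  simp only [Matrix.det_fin_two, pairCosineMatrix, Matrix.submatrix_apply, Matrix.of_apply,
    Matrix.cons_val_zero, Matrix.cons_val_one]
  linear_combination 4 * cos_add_mul_cos_add_sub_cos_add_mul_cos_add (θ a) (θ b) (φ i) (φ j)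

theorem two_le_rank_pairCosineMatrix [Fintype κ] {a b : ι} {i j : κ} (hθ : sin (θ b - θ a) ≠ 0)
    (hφ : sin (φ i - φ j) ≠ 0) : 2 ≤ (pairCosineMatrix θ φ).rank := by
  simpa using (pairCosineMatrix θ φ).card_le_rank_of_det_submatrix_ne_zero ![(a, a), (b, b)]
    ![i, j] (by rw [det_pairCosineMatrix_submatrix_diag]; positivity)

end PairCosineMatrix

theorem stmt6_general (p m : ℕ) (hp : 3 ≤ p) (φ : Fin m → ℝ)
    (h : ∃ i j : Fin m, Real.sin (φ i - φ j) ≠ 0) :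
    (Matrix.of fun (ab : Fin p × Fin p) (i : Fin m) =>
        Real.cos (2 * π * ab.1 / p + φ i) + Real.cos (2 * π * ab.2 / p + φ i)).rank = 2 := by
  obtain ⟨i, j, hij⟩ := h
  let θ : Fin p → ℝ := fun t => 2 * π * t / p
  have hθ : sin (θ ⟨1, by omega⟩ - θ ⟨0, by omega⟩) ≠ 0 := by
    have hp' : (2 : ℝ) < p := by exact_mod_cast hp
    simpa [θ] using (sin_two_pi_div_pos hp').ne'
  exact le_antisymm (rank_pairCosineMatrix_le_two θ φ) (two_le_rank_pairCosineMatrix θ φ hθ hij)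

theorem stmt6 (p m : ℕ) (hp : 3 ≤ p) (hm : 2 ≤ m) (φ : Fin m → ℝ)
    (h : ∃ i j : Fin m, Real.sin (φ i - φ j) ≠ 0) :
    (Matrix.of fun (ab : Fin p × Fin p) (i : Fin m) =>
        Real.cos (2 * π * ab.1 / p + φ i) + Real.cos (2 * π * ab.2 / p + φ i)).rank = 2 :=
  stmt6_general p m hp φ h
end

section
/- If for some pair of neurons i ≠ j the 4-vectors (cos φ_i^L, −sin φ_i^L, cos φ_i^R, −sin φ_i^R) and (cos φ_j^L, −sin φ_j^L, cos φ_j^R, −sin φ_j^R), together with two more neurons' vectors, span ℝ⁴ (i.e., the 4×m phase matrix W has rank 4), then the preactivation matrix X_{(a,b),i} = cos(θ_a + φ_i^L) + cos(θ_b + φ_i^R) has rank exactly 4, for p ≥ 3. -/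
/-!
Write `θ_t = 2πt/p`. By the cosine addition formula the preactivation matrix factors as
`X = A W`, where the row `(a, b)` of `A` is `(cos θ_a, sin θ_a, cos θ_b, sin θ_b)`. Since `W` has
rank 4 it is onto `ℝ⁴`, so `rank X = rank A`. The columns of `A` are independent: an affine
function of the plane vanishing at the three points `e^{iθ_0}, e^{iθ_1}, e^{iθ_2}` of the unit
circle is zero, because for `p ≥ 3` these points are distinct, hence not collinear.
-/

open Real

theorem Matrix.rank_mul_eq_left_of_rank_eq_card {K m n o : Type*} [Field K] [Fintype n]
    [Fintype o] (A : Matrix m n K) {B : Matrix n o K} (hB : B.rank = Fintype.card n) :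
    (A * B).rank = A.rank := by
  have hBsurj : LinearMap.range B.mulVecLin = ⊤ :=
    Submodule.eq_top_of_finrank_eq (by rw [← Matrix.rank, hB, Module.finrank_fintype_fun_eq_card])
  rw [Matrix.rank, Matrix.mulVecLin_mul, LinearMap.range_comp_of_range_eq_top _ hBsurj, Matrix.rank]

theorem eq_zero_of_vanishing_at_three_angles {θ c x y : ℝ} (hθ : sin θ ≠ 0)
    (h₀ : c + x = 0) (h₁ : c + x * cos θ + y * sin θ = 0)
    (h₂ : c + x * cos (2 * θ) + y * sin (2 * θ) = 0) : c = 0 ∧ x = 0 ∧ y = 0 := by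
  rw [cos_two_mul, sin_two_mul] at h₂
  have hrot : y * cos θ = x * sin θ := by
    apply mul_left_cancel₀ hθ
    linear_combination (1/2 : ℝ) * (h₂ - h₀) - x * sin_sq_add_cos_sq θ
  have hx : x * (1 - cos θ) = 0 := by
    linear_combination cos θ * (h₁ - h₀) - sin θ * hrot - x * sin_sq_add_cos_sq θ
  have hcos : 1 - cos θ ≠ 0 := by
    intro hc
    apply hθ
    nlinarith [sin_sq_add_cos_sq θ]
  have hx0 : x = 0 := (mul_eq_zero.mp hx).resolve_right hcos
  have hy0 : y = 0 := by
    subst hx0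
    exact (mul_eq_zero.mp (by linarith : y * sin θ = 0)).resolve_right hθ
  exact ⟨by linarith, hx0, hy0⟩

noncomputable def cosSinFeatures (p : ℕ) : Matrix (Fin p × Fin p) (Fin 4) ℝ :=
  Matrix.of fun ab => ![cos (2 * π * ab.1 / p), sin (2 * π * ab.1 / p),
    cos (2 * π * ab.2 / p), sin (2 * π * ab.2 / p)]

theorem sin_two_pi_div_ne_zero {p : ℕ} (hp : 3 ≤ p) : sin (2 * π / p) ≠ 0 := by
  have hp' : (3 : ℝ) ≤ p := by exact_mod_cast hp
  refine (sin_pos_of_pos_of_lt_pi (by positivity) ?_).ne'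
  rw [div_lt_iff₀ (by positivity)]
  nlinarith [pi_pos]

theorem cosSinFeatures_mulVecLin_injective {p : ℕ} (hp : 3 ≤ p) :
    Function.Injective (cosSinFeatures p).mulVecLin := by
  rw [← LinearMap.ker_eq_bot, LinearMap.ker_eq_bot']
  intro v hv
  set θ := 2 * π / p
  have h : ∀ k l : ℕ, k < p → l < p →
      cos (k * θ) * v 0 + sin (k * θ) * v 1 + cos (l * θ) * v 2 + sin (l * θ) * v 3 = 0 := by
    intro k l hk hl
    have hangle : ∀ n : ℕ, 2 * π * n / p = n * θ := fun n => by ring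
    simpa [cosSinFeatures, Matrix.mulVec, dotProduct, Fin.sum_univ_four, -Nat.cast_ofNat, hangle]
      using congrFun hv (⟨k, hk⟩, ⟨l, hl⟩)
  have h00 := h 0 0 (by omega) (by omega)
  have h10 := h 1 0 (by omega) (by omega)
  have h20 := h 2 0 (by omega) (by omega)
  have h01 := h 0 1 (by omega) (by omega)
  have h02 := h 0 2 (by omega) (by omega)
  simp only [Nat.cast_zero, Nat.cast_one, Nat.cast_ofNat, zero_mul, one_mul, cos_zero,
    sin_zero, add_zero] at h00 h10 h20 h01 h02
  have hθ := sin_two_pi_div_ne_zero hp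
  obtain ⟨-, h0, h1⟩ := eq_zero_of_vanishing_at_three_angles (θ := θ) (c := v 2) (x := v 0)
    (y := v 1) hθ (by linarith) (by linarith) (by linarith)
  obtain ⟨-, h2, h3⟩ := eq_zero_of_vanishing_at_three_angles (θ := θ) (c := v 0) (x := v 2)
    (y := v 3) hθ (by linarith) (by linarith) (by linarith)
  ext j
  fin_cases j <;> assumption

theorem rank_cosSinFeatures {p : ℕ} (hp : 3 ≤ p) : (cosSinFeatures p).rank = 4 := by
  rw [Matrix.rank, LinearMap.finrank_range_of_inj (cosSinFeatures_mulVecLin_injective hp),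
    Module.finrank_fin_fun]

theorem cos_add_cos_eq_cosSinFeatures_mul {p m : ℕ} (φL φR : Fin m → ℝ) :
    (Matrix.of fun (ab : Fin p × Fin p) (i : Fin m) =>
        Real.cos (2 * π * ab.1 / p + φL i) + Real.cos (2 * π * ab.2 / p + φR i)) =
      cosSinFeatures p * Matrix.of fun (j : Fin 4) (i : Fin m) =>
        (![Real.cos (φL i), -Real.sin (φL i),
           Real.cos (φR i), -Real.sin (φR i)] : Fin 4 → ℝ) j := by
  ext ab i
  simp [cosSinFeatures, Matrix.mul_apply, Fin.sum_univ_four, cos_add]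
  ring

theorem stmt18_general (p m : ℕ) (hp : 3 ≤ p) (φL φR : Fin m → ℝ)
    (hW : (Matrix.of fun (j : Fin 4) (i : Fin m) =>
        (![Real.cos (φL i), -Real.sin (φL i),
           Real.cos (φR i), -Real.sin (φR i)] : Fin 4 → ℝ) j).rank = 4) :
    (Matrix.of fun (ab : Fin p × Fin p) (i : Fin m) =>
        Real.cos (2 * π * ab.1 / p + φL i) + Real.cos (2 * π * ab.2 / p + φR i)).rank = 4 := by
  rw [cos_add_cos_eq_cosSinFeatures_mul,
    Matrix.rank_mul_eq_left_of_rank_eq_card _ (by simpa using hW)]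
  exact rank_cosSinFeatures hp

theorem stmt18 (p m : ℕ) (hp : 3 ≤ p) (hm : 4 ≤ m) (φL φR : Fin m → ℝ)
    (hW : (Matrix.of fun (j : Fin 4) (i : Fin m) =>
        (![Real.cos (φL i), -Real.sin (φL i),
           Real.cos (φR i), -Real.sin (φR i)] : Fin 4 → ℝ) j).rank = 4) :
    (Matrix.of fun (ab : Fin p × Fin p) (i : Fin m) =>
        Real.cos (2 * π * ab.1 / p + φL i) + Real.cos (2 * π * ab.2 / p + φR i)).rank = 4 :=
  stmt18_general p m hp φL φR hW
end
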